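/- Let g be an arithmetic function with g(q) = 0 for all q > Q, where Q ≪ N, let f = g∗1, and let h ∈ ℕ. Then the exact identity Σ_{a≠0} W(a)·C_f(a) = Σ_{ℓ≤2h} Σ_{a≠0} W(aℓ) Σ_{q : (q,a)=1} g(ℓq) Σ_{N<ℓm≤2N, m≡a (mod q)} f(ℓm) holds, obtained by classifying each pair (a,q) according to ℓ = gcd(a,q). -/

import Mathlib

open Finset

noncomputable section

/-- `f = g ∗ 1`, i.e. `f n = ∑_{d ∣ n} g d`. -/
def star1 (g : ℕ → ℝ) (n : ℕ) : ℝ := ∑ d ∈ n.divisors, g d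

/-- The weight `W(a) = 1_{[-2h,2h]}(a) · max(2h - 3|a|, |a| - 2h)`. -/
def Wt (h : ℕ) (a : ℤ) : ℝ :=
  if |a| ≤ 2 * (h : ℤ) then max (2 * (h : ℝ) - 3 * |(a : ℝ)|) (|(a : ℝ)| - 2 * (h : ℝ)) else 0

/-- The correlation `C_f(a) = ∑_{N < n ≤ 2N} f(n) f(n-a)` (with `f` extended by `0`
to nonpositive arguments). -/
def Cf (f : ℕ → ℝ) (N : ℕ) (a : ℤ) : ℝ :=
  ∑ n ∈ Finset.Ioc (N : ℤ) (2 * (N : ℤ)), f n.toNat * f (n - a).toNat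

/-! Expanding `f (n - a) = ∑_{q ∣ n - a, q ≤ Q} g q` turns the left side into a sum over triples
`(a, n, q)` with `q ∣ n - a`. Putting `ℓ = gcd (a, q)`, `a = a' ℓ`, `q = ℓ q'` forces `n = ℓ m` with
`m ≡ a' (mod q')` and `gcd (a', q') = 1`; conversely `ℓ = gcd (a' ℓ, ℓ q')` is recovered from the
quadruple `(ℓ, a', q', m)`. This matches the two sides term by term wherever the summand is nonzero:
`W (a' ℓ) ≠ 0` forces `|a' ℓ| ≤ 2h`, and `g (ℓ q') ≠ 0` forces `ℓ q' ≤ Q`. -/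

lemma Wt_eq_zero_of_lt_abs {h : ℕ} {a : ℤ} (ha : 2 * (h : ℤ) < |a|) : Wt h a = 0 :=
  if_neg ha.not_ge

lemma Cf_eq_sum_Ioc_nat (f : ℕ → ℝ) (N : ℕ) (a : ℤ) :
    Cf f N a = ∑ n ∈ Ioc N (2 * N), f n * f ((n : ℤ) - a).toNat := by
  refine (sum_nbij' (fun n : ℕ => (n : ℤ)) Int.toNat ?_ ?_ ?_ ?_ ?_).symm <;>
    intro n hn <;> simp only [mem_Ioc] at hn ⊢ <;> simp <;> omega

lemma star1_eq_sum_Icc_dvd {g : ℕ → ℝ} {Q : ℕ} (hg : ∀ q, Q < q → g q = 0) {k : ℕ}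
    (hk : k ≠ 0) : star1 g k = ∑ q ∈ (Icc 1 Q).filter (· ∣ k), g q := by
  refine (sum_subset (fun q hq => ?_) fun q hq hqQ => hg q (lt_of_not_ge fun hqle => ?_)).symm
  · simp only [mem_filter, mem_Icc] at hq
    exact Nat.mem_divisors.mpr ⟨hq.2, hk⟩
  · rw [Nat.mem_divisors] at hq
    have hq1 : 1 ≤ q := Nat.pos_of_dvd_of_pos hq.1 (Nat.pos_of_ne_zero hk)
    exact hqQ (mem_filter.mpr ⟨mem_Icc.mpr ⟨hq1, hqle⟩, hq.1⟩)

lemma exists_gcd_split {a : ℤ} {n q : ℕ} (ha : a ≠ 0) (hdvd : (q : ℤ) ∣ n - a) :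
    ∃ ℓ : ℕ, ∃ a' : ℤ, ∃ q' m : ℕ, 0 < ℓ ∧ a = a' * ℓ ∧ q = ℓ * q' ∧ n = ℓ * m ∧
      a'.gcd q' = 1 ∧ (m : ℤ) ≡ a' [ZMOD q'] := by
  obtain ⟨ℓ, hℓ⟩ : ∃ ℓ, a.gcd q = ℓ := ⟨_, rfl⟩
  have hℓpos : 0 < ℓ := hℓ ▸ Int.gcd_pos_of_ne_zero_left _ ha
  obtain ⟨a', rfl⟩ : (ℓ : ℤ) ∣ a := hℓ ▸ Int.gcd_dvd_left _ _
  obtain ⟨q', rfl⟩ : ℓ ∣ q := Int.natCast_dvd_natCast.mp (hℓ ▸ Int.gcd_dvd_right _ _)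
  obtain ⟨m, rfl⟩ : ℓ ∣ n := by
    rw [← Int.natCast_dvd_natCast, ← sub_add_cancel (n : ℤ) (ℓ * a')]
    exact dvd_add (dvd_trans (by simp) hdvd) (dvd_mul_right _ _)
  refine ⟨ℓ, a', q', m, hℓpos, mul_comm _ _, rfl, rfl, ?_, ?_⟩
  · rw [Nat.cast_mul, Int.gcd_mul_left, Int.natAbs_natCast] at hℓ
    exact Nat.eq_of_mul_eq_mul_left hℓpos (hℓ.trans (mul_one ℓ).symm)
  · refine (Int.modEq_iff_dvd.mpr ?_).symm
    push_cast at hdvd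
    rwa [← mul_sub, mul_dvd_mul_iff_left (by exact_mod_cast hℓpos.ne')] at hdvd

lemma Int.gcd_mul_mul_eq_of_gcd_eq_one {a : ℤ} {q : ℕ} (ha : a.gcd q = 1) (ℓ : ℕ) :
    (a * ℓ).gcd ((ℓ * q : ℕ) : ℤ) = ℓ := by
  rw [mul_comm ℓ, Nat.cast_mul, Int.gcd_mul_right, ha, one_mul, Int.natAbs_natCast]

section

variable (Q N h : ℕ)

def shiftDivisorTriples : Finset (Σ _ : ℤ, Σ _ : ℕ, ℕ) :=
  ((Icc (-(2 * (h : ℤ))) (2 * (h : ℤ))).filter (· ≠ 0)).sigma fun a =>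
    (Ioc N (2 * N)).sigma fun n => (Icc 1 Q).filter fun q : ℕ => (q : ℤ) ∣ n - a

def gcdSplitQuadruples : Finset (Σ _ : ℕ, Σ _ : ℤ, Σ _ : ℕ, ℕ) :=
  (Icc 1 (2 * h)).sigma fun ℓ =>
    ((Icc (-(2 * (h : ℤ))) (2 * (h : ℤ))).filter (· ≠ 0)).sigma fun a =>
      ((Icc 1 Q).filter fun q : ℕ => Int.gcd a (q : ℤ) = 1).sigma fun q =>
        (Icc 1 (2 * N)).filter fun m : ℕ =>
          N < ℓ * m ∧ ℓ * m ≤ 2 * N ∧ (m : ℤ) % (q : ℤ) = a % (q : ℤ)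

variable {Q N h}

-- `2 * h ≤ N` keeps `n - a` positive, where `Int.toNat` would otherwise truncate.
lemma sum_mul_Cf_star1_eq_sum_shiftDivisorTriples {g : ℕ → ℝ} (w : ℤ → ℝ) (hhN : 2 * h ≤ N)
    (hg : ∀ q, Q < q → g q = 0) :
    ∑ a ∈ (Icc (-(2 * (h : ℤ))) (2 * (h : ℤ))).filter (· ≠ 0), w a * Cf (star1 g) N a
      = ∑ x ∈ shiftDivisorTriples Q N h, w x.1 * star1 g x.2.1 * g x.2.2 := by
  simp only [shiftDivisorTriples, sum_sigma, Cf_eq_sum_Ioc_nat, mul_sum]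
  refine sum_congr rfl fun a ha => sum_congr rfl fun n hn => ?_
  simp only [mem_filter, mem_Icc, mem_Ioc] at ha hn
  obtain ⟨k, hk⟩ : ∃ k : ℕ, (n : ℤ) - a = k := Int.eq_ofNat_of_zero_le (by omega)
  rw [hk, Int.toNat_natCast, star1_eq_sum_Icc_dvd (k := k) hg (by omega)]
  simp only [Int.natCast_dvd_natCast, mul_sum, mul_assoc]

lemma sum_gcd_classes_eq_sum_gcdSplitQuadruples (w : ℤ → ℝ) (f g : ℕ → ℝ) :
    ∑ ℓ ∈ Icc 1 (2 * h), ∑ a ∈ (Icc (-(2 * (h : ℤ))) (2 * (h : ℤ))).filter (· ≠ 0),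
        w (a * (ℓ : ℤ)) * ∑ q ∈ (Icc 1 Q).filter (fun q : ℕ => Int.gcd a (q : ℤ) = 1),
          g (ℓ * q) * ∑ m ∈ (Icc 1 (2 * N)).filter
              (fun m : ℕ => N < ℓ * m ∧ ℓ * m ≤ 2 * N ∧ (m : ℤ) % (q : ℤ) = a % (q : ℤ)),
            f (ℓ * m)
      = ∑ y ∈ gcdSplitQuadruples Q N h,
          w (y.2.1 * y.1) * g (y.1 * y.2.2.1) * f (y.1 * y.2.2.2) := by
  simp only [gcdSplitQuadruples, sum_sigma, mul_sum, mul_assoc]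

lemma sum_gcdSplitQuadruples_eq_sum_shiftDivisorTriples {w : ℤ → ℝ} {g : ℕ → ℝ} (f : ℕ → ℝ)
    (hw : ∀ a, 2 * (h : ℤ) < |a| → w a = 0) (hg : ∀ q, Q < q → g q = 0) :
    ∑ y ∈ gcdSplitQuadruples Q N h, w (y.2.1 * y.1) * g (y.1 * y.2.2.1) * f (y.1 * y.2.2.2)
      = ∑ x ∈ shiftDivisorTriples Q N h, w x.1 * f x.2.1 * g x.2.2 := by
  refine sum_bij_ne_zero (fun y _ _ => ⟨y.2.1 * y.1, y.1 * y.2.2.2, y.1 * y.2.2.1⟩)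
    ?_ ?_ ?_ fun y _ _ => mul_right_comm _ _ _
  · rintro ⟨ℓ, a, q, m⟩ hy hne
    simp only [gcdSplitQuadruples, mem_sigma, mem_filter, mem_Icc] at hy
    obtain ⟨⟨hℓ, -⟩, ⟨-, ha⟩, ⟨⟨hq, -⟩, -⟩, -, hNm, hm2N, hmod⟩ := hy
    have hwa : |a * ℓ| ≤ 2 * h := not_lt.mp fun hlt => hne (by rw [hw _ hlt]; ring)
    have hgq : ℓ * q ≤ Q := not_lt.mp fun hlt => hne (by rw [hg _ hlt]; ring)
    simp only [shiftDivisorTriples, mem_sigma, mem_filter, mem_Icc, mem_Ioc]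
    refine ⟨⟨abs_le.mp hwa, mul_ne_zero ha (by positivity)⟩, ⟨hNm, hm2N⟩,
      ⟨Nat.mul_pos hℓ hq, hgq⟩, ?_⟩
    rw [Nat.cast_mul, Nat.cast_mul, mul_comm a, ← mul_sub]
    exact mul_dvd_mul_left _ (Int.ModEq.symm hmod).dvd
  · rintro ⟨ℓ, a, q, m⟩ hy - ⟨k, b, r, m'⟩ hy' - heq
    simp only [gcdSplitQuadruples, mem_sigma, mem_filter, mem_Icc] at hy hy'
    simp only [Sigma.mk.injEq, heq_eq_eq] at heq
    obtain ⟨hab, hmm', hqr⟩ := heq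
    obtain rfl : ℓ = k := by
      rw [← Int.gcd_mul_mul_eq_of_gcd_eq_one hy.2.2.1.2 ℓ,
        ← Int.gcd_mul_mul_eq_of_gcd_eq_one hy'.2.2.1.2 k, hab, hqr]
    have hℓ : 0 < ℓ := hy.1.1
    obtain rfl := mul_right_cancel₀ (by positivity) hab
    obtain rfl := Nat.eq_of_mul_eq_mul_left hℓ hmm'
    obtain rfl := Nat.eq_of_mul_eq_mul_left hℓ hqr
    rfl
  · rintro ⟨a, n, q⟩ hx hne
    simp only [shiftDivisorTriples, mem_sigma, mem_filter, mem_Icc, mem_Ioc] at hx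
    obtain ⟨⟨haI, ha⟩, ⟨hNn, hn2N⟩, ⟨hq, hqQ⟩, hdvd⟩ := hx
    obtain ⟨ℓ, a', q', m, hℓ, rfl, rfl, rfl, hcop, hmod⟩ := exists_gcd_split ha hdvd
    have ha' : a' ≠ 0 := left_ne_zero_of_mul ha
    have habs : |a' * ℓ| ≤ 2 * h := abs_le.mpr haI
    have hℓabs : (ℓ : ℤ) ≤ |a' * ℓ| := by
      rw [abs_mul, Nat.abs_cast]
      exact le_mul_of_one_le_left (by positivity) (Int.one_le_abs ha')
    have ha'abs : |a'| ≤ |a' * ℓ| := by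
      rw [abs_mul]
      exact le_mul_of_one_le_right (abs_nonneg _) (by exact_mod_cast hℓ)
    have hq' : 0 < q' := Nat.pos_of_mul_pos_left hq
    have hm : 0 < m := Nat.pos_of_ne_zero fun hm0 => by simp [hm0] at hNn
    refine ⟨⟨ℓ, a', q', m⟩, ?_, by rwa [mul_right_comm], rfl⟩
    simp only [gcdSplitQuadruples, mem_sigma, mem_filter, mem_Icc]
    refine ⟨⟨hℓ, by omega⟩, ⟨abs_le.mp (ha'abs.trans habs), ha'⟩, ⟨⟨hq', ?_⟩, hcop⟩,
      ⟨hm, ?_⟩, hNn, hn2N, hmod⟩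
    · exact (Nat.le_mul_of_pos_left q' hℓ).trans hqQ
    · exact (Nat.le_mul_of_pos_left m hℓ).trans hn2N

end

theorem statement10_general (g : ℕ → ℝ) (Q N h : ℕ) (hhN : 2 * h ≤ N)
    (hsupp : ∀ q : ℕ, Q < q → g q = 0) :
    ∑ a ∈ (Finset.Icc (-(2 * (h : ℤ))) (2 * (h : ℤ))).filter (· ≠ 0),
        Wt h a * Cf (star1 g) N a
    = ∑ ℓ ∈ Finset.Icc 1 (2 * h),
        ∑ a ∈ (Finset.Icc (-(2 * (h : ℤ))) (2 * (h : ℤ))).filter (· ≠ 0),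
          Wt h (a * (ℓ : ℤ)) *
            ∑ q ∈ (Finset.Icc 1 Q).filter (fun q : ℕ => Int.gcd a (q : ℤ) = 1),
              g (ℓ * q) *
                ∑ m ∈ (Finset.Icc 1 (2 * N)).filter
                    (fun m : ℕ => N < ℓ * m ∧ ℓ * m ≤ 2 * N ∧ (m : ℤ) % (q : ℤ) = a % (q : ℤ)),
                  star1 g (ℓ * m) := by
  rw [sum_mul_Cf_star1_eq_sum_shiftDivisorTriples _ hhN hsupp,
    sum_gcd_classes_eq_sum_gcdSplitQuadruples,
    sum_gcdSplitQuadruples_eq_sum_shiftDivisorTriples _ (fun _ => Wt_eq_zero_of_lt_abs) hsupp]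

theorem statement10 (g : ℕ → ℝ) (Q N h : ℕ) (hQN : Q ≤ N) (hhN : 2 * h ≤ N)
    (hsupp : ∀ q : ℕ, Q < q → g q = 0) :
    ∑ a ∈ (Finset.Icc (-(2 * (h : ℤ))) (2 * (h : ℤ))).filter (· ≠ 0),
        Wt h a * Cf (star1 g) N a
    = ∑ ℓ ∈ Finset.Icc 1 (2 * h),
        ∑ a ∈ (Finset.Icc (-(2 * (h : ℤ))) (2 * (h : ℤ))).filter (· ≠ 0),
          Wt h (a * (ℓ : ℤ)) *
            ∑ q ∈ (Finset.Icc 1 Q).filter (fun q : ℕ => Int.gcd a (q : ℤ) = 1),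
              g (ℓ * q) *
                ∑ m ∈ (Finset.Icc 1 (2 * N)).filter
                    (fun m : ℕ => N < ℓ * m ∧ ℓ * m ≤ 2 * N ∧ (m : ℤ) % (q : ℤ) = a % (q : ℤ)),
                  star1 g (ℓ * m) :=
  statement10_general g Q N h hhN hsupp
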